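/- There exists a sequence X₁ ⊆ X₂ ⊆ X₃ ⊆ ⋯ of finite subsets of ℙ¹(ℚ) such that: (1) each Xᵢ is rigid, i.e. every locally injective simplicial map Xᵢ → ℙ¹(ℚ) (with respect to the Farey graph F) coincides with the action of some element of GL(2,ℤ); (2) for each i, the only elements of GL(2,ℤ) fixing every point of Xᵢ are I and −I; and (3) ⋃_{i ≥ 1} Xᵢ = ℙ¹(ℚ). (This is the paper's main theorem, Theorem 1.1 — an exhaustion of the curve complex by finite rigid sets — in the case of the surfaces S₁,₁ and S₀,₄, whose curve complex is the Farey complex.) -/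

import Mathlib

/-- The projective line over `ℚ`. -/
abbrev P1Q := Projectivization ℚ (Fin 2 → ℚ)

/-- The point of `ℙ¹(ℚ)` with homogeneous integer coordinates `[a : b]`
(a junk value is returned when `a = b = 0`, which never occurs for primitive vectors). -/
def fareyMk (a b : ℤ) : P1Q :=
  if h : a = 0 ∧ b = 0 then
    Projectivization.mk ℚ ![1, 0] (by
      intro hv
      have h0 := congrFun hv 0
      simp at h0)
  else
    Projectivization.mk ℚ ![(a : ℚ), (b : ℚ)] (by
      intro hv
      have h0 : (a : ℚ) = 0 := by simpa using congrFun hv 0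
      have h1 : (b : ℚ) = 0 := by simpa using congrFun hv 1
      exact h ⟨by exact_mod_cast h0, by exact_mod_cast h1⟩)

/-- Two points of `ℙ¹(ℚ)` are related if they are represented by primitive integer
vectors `(a,b)` and `(c,d)` with `|ad - bc| = 1`. -/
def fareyRel (x y : P1Q) : Prop :=
  ∃ a b c d : ℤ, Int.gcd a b = 1 ∧ Int.gcd c d = 1 ∧ |a * d - b * c| = 1 ∧
    x = fareyMk a b ∧ y = fareyMk c d

/-- The Farey graph on `ℙ¹(ℚ)`. -/
def fareyGraph : SimpleGraph P1Q := SimpleGraph.fromRel fareyRel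

/-- The rational matrix associated to an element of `GL(2,ℤ)`. -/
def matQ (g : GL (Fin 2) ℤ) : Matrix (Fin 2) (Fin 2) ℚ :=
  (g : Matrix (Fin 2) (Fin 2) ℤ).map ((↑) : ℤ → ℚ)

lemma matQ_mul (g h : GL (Fin 2) ℤ) : matQ (g * h) = matQ g * matQ h := by
  simpa [matQ] using
    (RingHom.mapMatrix (Int.castRingHom ℚ)).map_mul (g : Matrix (Fin 2) (Fin 2) ℤ) h

lemma matQ_one : matQ 1 = (1 : Matrix (Fin 2) (Fin 2) ℚ) := by
  simpa [matQ] using (RingHom.mapMatrix (Int.castRingHom ℚ)).map_one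

lemma mulVecLin_matQ_injective (g : GL (Fin 2) ℤ) :
    Function.Injective ((matQ g).mulVecLin) := by
  have key : ∀ v : Fin 2 → ℚ, (matQ g⁻¹).mulVecLin ((matQ g).mulVecLin v) = v := by
    intro v
    rw [Matrix.mulVecLin_apply, Matrix.mulVecLin_apply, Matrix.mulVec_mulVec,
      ← matQ_mul, inv_mul_cancel, matQ_one, Matrix.one_mulVec]
  exact Function.LeftInverse.injective key

/-- The action of `GL(2,ℤ)` on `ℙ¹(ℚ)` by linear action on representative vectors. -/
def fareyAct (g : GL (Fin 2) ℤ) (x : P1Q) : P1Q :=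
  Projectivization.map ((matQ g).mulVecLin) (mulVecLin_matQ_injective g) x

/-- A map `φ` is simplicial on `Y ⊆ ℙ¹(ℚ)` with respect to the Farey graph. -/
def FareySimplicial (Y : Set P1Q) (φ : P1Q → P1Q) : Prop :=
  ∀ y ∈ Y, ∀ z ∈ Y, fareyGraph.Adj y z → fareyGraph.Adj (φ y) (φ z)

/-- The closed star of `y` in `Y`: the set `{y} ∪ {z ∈ Y : z adjacent to y}`. -/
def fareyClosedStar (Y : Set P1Q) (y : P1Q) : Set P1Q :=
  {z ∈ Y | z = y ∨ fareyGraph.Adj y z}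

/-- A map `φ` is locally injective on `Y ⊆ ℙ¹(ℚ)` with respect to the Farey graph. -/
def FareyLocallyInjective (Y : Set P1Q) (φ : P1Q → P1Q) : Prop :=
  ∀ y ∈ Y, Set.InjOn φ (fareyClosedStar Y y)

/-!
Primitive integer vectors represent the points of `ℙ¹(ℚ)` up to sign, `[u]` and `[v]` are
adjacent iff `det(u, v) = ±1`, and the edge `[u]`, `[v]` lies in exactly two triangles, with
apexes `[u + v]` and `[u - v]`. Take `Xₙ` to be the vertices of depth at most `n` of the
Stern–Brocot trees grown from the edge `[1 : 0]`, `[0 : 1]` on both of its sides; by the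
Euclidean algorithm every point occurs in some `Xₙ`.

A simplicial, locally injective `φ` maps the triangle `[1 : 0]`, `[0 : 1]`, `[1 : 1]` like some
`g ∈ GL(2,ℤ)`, and this determines `g` up to sign. Going down the trees, `φ [u + v]` is a common
neighbour of `g [u]` and `g [v]`, so it is `g [u + v]` or `g [u - v] = φ [u - v]`, and local
injectivity at `[u]` excludes the second option.
-/

namespace Farey

lemma abs_eq_one_iff {a : ℤ} : |a| = 1 ↔ a = 1 ∨ a = -1 := abs_eq zero_le_one

def det2 (u v : ℤ × ℤ) : ℤ := u.1 * v.2 - u.2 * v.1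

def Primitive (u : ℤ × ℤ) : Prop := IsCoprime u.1 u.2

def pmk (u : ℤ × ℤ) : P1Q := fareyMk u.1 u.2

lemma det2_comm (u v : ℤ × ℤ) : det2 v u = -det2 u v := by unfold det2; ring

@[simp] lemma det2_neg_left (u v : ℤ × ℤ) : det2 (-u) v = -det2 u v := by
  simp only [det2, Prod.fst_neg, Prod.snd_neg]; ring

@[simp] lemma det2_neg_right (u v : ℤ × ℤ) : det2 u (-v) = -det2 u v := by
  simp only [det2, Prod.fst_neg, Prod.snd_neg]; ring

lemma det2_add_left (u v : ℤ × ℤ) : det2 (u + v) v = det2 u v := by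
  simp only [det2, Prod.fst_add, Prod.snd_add]; ring

lemma det2_add_right (u v : ℤ × ℤ) : det2 u (u + v) = det2 u v := by
  simp only [det2, Prod.fst_add, Prod.snd_add]; ring

lemma det2_sub_left (u v : ℤ × ℤ) : det2 (u - v) v = det2 u v := by
  simp only [det2, Prod.fst_sub, Prod.snd_sub]; ring

lemma det2_sub_right (u v : ℤ × ℤ) : det2 u (u - v) = -det2 u v := by
  simp only [det2, Prod.fst_sub, Prod.snd_sub]; ring

/-- Cramer's rule in dimension two. -/
lemma det2_smul_eq (u v w : ℤ × ℤ) : det2 u v • w = det2 w v • u + det2 u w • v := by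
  ext <;> simp only [det2, Prod.smul_fst, Prod.smul_snd, Prod.fst_add, Prod.snd_add,
    smul_eq_mul] <;> ring

lemma Primitive.ne_zero {u : ℤ × ℤ} (hu : Primitive u) : u ≠ 0 := by
  rintro rfl
  exact not_isCoprime_zero_zero hu

lemma Primitive.neg {u : ℤ × ℤ} (hu : Primitive u) : Primitive (-u) :=
  hu.neg_neg

lemma Primitive.exists_det2_eq_one {u : ℤ × ℤ} (hu : Primitive u) :
    ∃ v, det2 u v = 1 := by
  obtain ⟨a, b, h⟩ := hu
  exact ⟨(-b, a), by simp only [det2]; linear_combination h⟩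

lemma primitive_of_abs_det2_eq_one {u v : ℤ × ℤ} (h : |det2 u v| = 1) : Primitive u := by
  rcases abs_eq_one_iff.mp h with h | h <;> unfold det2 at h
  · exact ⟨v.2, -v.1, by linear_combination h⟩
  · exact ⟨-v.2, v.1, by linear_combination -h⟩

lemma exists_eq_smul_of_det2_eq_zero {u v : ℤ × ℤ} (hv : Primitive v) (h : det2 u v = 0) :
    ∃ k : ℤ, u = k • v := by
  obtain ⟨v', hv'⟩ := hv.exists_det2_eq_one
  refine ⟨det2 u v', ?_⟩
  have := det2_smul_eq v v' u
  rwa [hv', one_smul, det2_comm u v, h, neg_zero, zero_smul, add_zero] at this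

lemma eq_or_eq_neg_of_det2_eq_zero {u v : ℤ × ℤ} (hu : Primitive u) (hv : Primitive v)
    (h : det2 u v = 0) : u = v ∨ u = -v := by
  obtain ⟨k, rfl⟩ := exists_eq_smul_of_det2_eq_zero hv h
  have hk : IsUnit k := isCoprime_self.mp
    (hu.of_mul_left_left.of_mul_right_left)
  rcases Int.isUnit_iff.mp hk with rfl | rfl <;> simp

lemma vecQ_ne_zero {u : ℤ × ℤ} (hu : u ≠ 0) : (![(u.1 : ℚ), u.2] : Fin 2 → ℚ) ≠ 0 := by
  intro h
  have h0 : u.1 = 0 := by simpa using congrFun h 0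
  have h1 : u.2 = 0 := by simpa using congrFun h 1
  exact hu (Prod.ext h0 h1)

lemma pmk_eq_mk {u : ℤ × ℤ} (hu : u ≠ 0) :
    pmk u = Projectivization.mk ℚ ![(u.1 : ℚ), u.2] (vecQ_ne_zero hu) := by
  have : ¬(u.1 = 0 ∧ u.2 = 0) := fun h => hu (Prod.ext h.1 h.2)
  simp only [pmk, fareyMk, this, dite_false]

lemma pmk_smul {k : ℤ} (hk : k ≠ 0) (u : ℤ × ℤ) : pmk (k • u) = pmk u := by
  rcases eq_or_ne u 0 with rfl | hu
  · rw [smul_zero]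
  rw [pmk_eq_mk (smul_ne_zero hk hu), pmk_eq_mk hu, Projectivization.mk_eq_mk_iff']
  exact ⟨k, by ext i; fin_cases i <;> simp⟩

@[simp] lemma pmk_neg (u : ℤ × ℤ) : pmk (-u) = pmk u := by
  simpa using pmk_smul (k := -1) (by norm_num) u

lemma det2_eq_zero_of_pmk_eq {u v : ℤ × ℤ} (hu : u ≠ 0) (hv : v ≠ 0) (h : pmk u = pmk v) :
    det2 u v = 0 := by
  rw [pmk_eq_mk hu, pmk_eq_mk hv, Projectivization.mk_eq_mk_iff'] at h
  obtain ⟨a, ha⟩ := h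
  have h0 : a * v.1 = u.1 := by simpa using congrFun ha 0
  have h1 : a * v.2 = u.2 := by simpa using congrFun ha 1
  have : (det2 u v : ℚ) = 0 := by
    push_cast [det2]
    rw [← h0, ← h1]
    ring
  exact_mod_cast this

lemma pmk_ne_of_det2_ne_zero {u v : ℤ × ℤ} (hu : u ≠ 0) (hv : v ≠ 0) (h : det2 u v ≠ 0) :
    pmk u ≠ pmk v :=
  fun huv => h (det2_eq_zero_of_pmk_eq hu hv huv)

lemma eq_or_eq_neg_of_pmk_eq {u v : ℤ × ℤ} (hu : Primitive u) (hv : Primitive v)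
    (h : pmk u = pmk v) : u = v ∨ u = -v :=
  eq_or_eq_neg_of_det2_eq_zero hu hv (det2_eq_zero_of_pmk_eq hu.ne_zero hv.ne_zero h)

lemma abs_det2_congr {u u' v v' : ℤ × ℤ} (hu : Primitive u) (hu' : Primitive u')
    (hv : Primitive v) (hv' : Primitive v') (hpu : pmk u = pmk u') (hpv : pmk v = pmk v') :
    |det2 u v| = |det2 u' v'| := by
  rcases eq_or_eq_neg_of_pmk_eq hu hu' hpu with rfl | rfl <;>
    rcases eq_or_eq_neg_of_pmk_eq hv hv' hpv with rfl | rfl <;> simp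

lemma exists_pmk_eq_mk (v : Fin 2 → ℚ) (hv : v ≠ 0) :
    ∃ w : ℤ × ℤ, w ≠ 0 ∧ Projectivization.mk ℚ v hv = pmk w := by
  set w : ℤ × ℤ := ((v 0).num * (v 1).den, (v 1).num * (v 0).den)
  have hN : ((v 0).den * (v 1).den : ℚ) ≠ 0 := by positivity
  have hw : (![(w.1 : ℚ), w.2] : Fin 2 → ℚ) = ((v 0).den * (v 1).den : ℚ) • v := by
    ext i
    fin_cases i <;> simp [w, ← Rat.mul_den_eq_num] <;> ring
  have hw0 : w ≠ 0 := by
    intro h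
    have : ((v 0).den * (v 1).den : ℚ) • v = 0 := by
      rw [← hw, h]
      ext i; fin_cases i <;> simp
    exact hv ((smul_eq_zero.mp this).resolve_left hN)
  refine ⟨w, hw0, ?_⟩
  rw [pmk_eq_mk hw0, Projectivization.mk_eq_mk_iff', hw]
  exact ⟨((v 0).den * (v 1).den : ℚ)⁻¹, by rw [smul_smul, inv_mul_cancel₀ hN, one_smul]⟩

lemma exists_eq_smul_primitive {w : ℤ × ℤ} (hw : w ≠ 0) :
    ∃ d : ℤ, ∃ u, d ≠ 0 ∧ Primitive u ∧ w = d • u := by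
  have hpos : 0 < Int.gcd w.1 w.2 :=
    Int.gcd_pos_iff.mpr (by by_contra! h; exact hw (Prod.ext h.1 h.2))
  obtain ⟨d, a, b, hd, hab, h1, h2⟩ := Int.exists_gcd_one' hpos
  refine ⟨d, (a, b), by positivity, Int.isCoprime_iff_gcd_eq_one.mpr hab, ?_⟩
  ext <;> simp [h1, h2, mul_comm]

lemma exists_primitive_pmk_eq (x : P1Q) : ∃ u, Primitive u ∧ x = pmk u := by
  induction x using Projectivization.ind with
  | h v hv =>
    obtain ⟨w, hw, hvw⟩ := exists_pmk_eq_mk v hv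
    obtain ⟨d, u, hd, hu, rfl⟩ := exists_eq_smul_primitive hw
    exact ⟨u, hu, hvw.trans (pmk_smul hd u)⟩

lemma adj_pmk_iff {u v : ℤ × ℤ} (hu : Primitive u) (hv : Primitive v) :
    fareyGraph.Adj (pmk u) (pmk v) ↔ |det2 u v| = 1 := by
  rw [fareyGraph, SimpleGraph.fromRel_adj]
  constructor
  · rintro ⟨-, ⟨a, b, c, d, hab, hcd, hdet, hua, hvc⟩ | ⟨a, b, c, d, hab, hcd, hdet, hva, huc⟩⟩
    · rw [abs_det2_congr (u' := (a, b)) (v' := (c, d)) hu (Int.isCoprime_iff_gcd_eq_one.mpr hab)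
        hv (Int.isCoprime_iff_gcd_eq_one.mpr hcd) hua hvc]
      exact hdet
    · rw [← abs_neg, ← det2_comm, abs_det2_congr (u' := (a, b)) (v' := (c, d)) hv
        (Int.isCoprime_iff_gcd_eq_one.mpr hab) hu (Int.isCoprime_iff_gcd_eq_one.mpr hcd) hva huc]
      exact hdet
  · intro h
    refine ⟨pmk_ne_of_det2_ne_zero hu.ne_zero hv.ne_zero ?_, Or.inl ?_⟩
    · rintro h0
      simp [h0] at h
    · exact ⟨u.1, u.2, v.1, v.2, Int.isCoprime_iff_gcd_eq_one.mp hu,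
        Int.isCoprime_iff_gcd_eq_one.mp hv, h, rfl, rfl⟩

lemma eq_pmk_add_or_sub_of_adj {u v : ℤ × ℤ} (huv : |det2 u v| = 1) {y : P1Q}
    (huy : fareyGraph.Adj (pmk u) y) (hvy : fareyGraph.Adj (pmk v) y) :
    y = pmk (u + v) ∨ y = pmk (u - v) := by
  have hu := primitive_of_abs_det2_eq_one huv
  have hv := primitive_of_abs_det2_eq_one (v := u) (by rwa [det2_comm, abs_neg])
  obtain ⟨w, hw, rfl⟩ := exists_primitive_pmk_eq y
  have huw := (adj_pmk_iff hu hw).mp huy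
  have hwv : |det2 w v| = 1 := by rw [det2_comm, abs_neg]; exact (adj_pmk_iff hv hw).mp hvy
  have key := det2_smul_eq u v w
  have : w = u + v ∨ w = -(u + v) ∨ w = u - v ∨ w = -(u - v) := by
    rcases abs_eq_one_iff.mp huv with h₁ | h₁ <;> rcases abs_eq_one_iff.mp huw with h₂ | h₂ <;>
      rcases abs_eq_one_iff.mp hwv with h₃ | h₃ <;>
      simp only [h₁, h₂, h₃, Prod.ext_iff, Prod.smul_fst, Prod.smul_snd, Prod.fst_add,
        Prod.snd_add, Prod.fst_sub, Prod.snd_sub, Prod.fst_neg, Prod.snd_neg,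
        smul_eq_mul] at key ⊢ <;>
      omega
  rcases this with rfl | rfl | rfl | rfl <;> simp only [pmk_neg, true_or, or_true]

def ofCols (u v : ℤ × ℤ) : ℤ × ℤ →+ ℤ × ℤ where
  toFun w := w.1 • u + w.2 • v
  map_zero' := by simp
  map_add' w w' := by simp only [Prod.fst_add, Prod.snd_add, add_smul]; abel

@[simp] lemma ofCols_apply (u v w : ℤ × ℤ) : ofCols u v w = w.1 • u + w.2 • v := rfl

lemma det2_ofCols (u v w w' : ℤ × ℤ) :
    det2 (ofCols u v w) (ofCols u v w') = det2 u v * det2 w w' := by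
  simp only [ofCols_apply, det2, Prod.fst_add, Prod.snd_add, Prod.smul_fst, Prod.smul_snd,
    smul_eq_mul]
  ring

def gact (g : GL (Fin 2) ℤ) : ℤ × ℤ →+ ℤ × ℤ := ofCols (g 0 0, g 1 0) (g 0 1, g 1 1)

lemma abs_det2_cols (g : GL (Fin 2) ℤ) : |det2 (g 0 0, g 1 0) (g 0 1, g 1 1)| = 1 := by
  have h := (Matrix.isUnit_iff_isUnit_det _).mp g.isUnit
  rw [Matrix.det_fin_two, Int.isUnit_iff_abs_eq] at h
  convert h using 2
  unfold det2
  ring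

lemma abs_det2_gact (g : GL (Fin 2) ℤ) (u v : ℤ × ℤ) :
    |det2 (gact g u) (gact g v)| = |det2 u v| := by
  rw [gact, det2_ofCols, abs_mul, abs_det2_cols, one_mul]

lemma Primitive.gact {u : ℤ × ℤ} (g : GL (Fin 2) ℤ) (hu : Primitive u) :
    Primitive (Farey.gact g u) := by
  obtain ⟨v, hv⟩ := hu.exists_det2_eq_one
  exact primitive_of_abs_det2_eq_one (v := Farey.gact g v) (by rw [abs_det2_gact, hv, abs_one])

lemma fareyAct_pmk (g : GL (Fin 2) ℤ) {u : ℤ × ℤ} (hu : Primitive u) :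
    fareyAct g (pmk u) = pmk (gact g u) := by
  rw [pmk_eq_mk hu.ne_zero, pmk_eq_mk (hu.gact g).ne_zero, fareyAct, Projectivization.map_mk]
  congr 1
  ext i
  fin_cases i <;> simp [matQ, Matrix.mulVec, dotProduct, Fin.sum_univ_two, gact] <;> ring

lemma exists_gact_eq_ofCols {u v : ℤ × ℤ} (h : |det2 u v| = 1) :
    ∃ g : GL (Fin 2) ℤ, gact g = ofCols u v := by
  have hunit : IsUnit !![u.1, v.1; u.2, v.2] := by
    rw [Matrix.isUnit_iff_isUnit_det, Matrix.det_fin_two_of, Int.isUnit_iff_abs_eq]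
    convert h using 2
    unfold det2
    ring
  refine ⟨hunit.unit, ?_⟩
  simp [gact]

lemma fareyAct_one (x : P1Q) : fareyAct 1 x = x := by
  obtain ⟨u, hu, rfl⟩ := exists_primitive_pmk_eq x
  rw [fareyAct_pmk 1 hu]
  congr 1
  ext <;> simp [gact]

lemma fareyAct_neg_one (x : P1Q) : fareyAct (-1) x = x := by
  obtain ⟨u, hu, rfl⟩ := exists_primitive_pmk_eq x
  rw [fareyAct_pmk _ hu, ← pmk_neg u]
  congr 1
  ext <;> simp [gact]

lemma primitive_one_zero : Primitive (1, 0) := isCoprime_one_left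
lemma primitive_zero_one : Primitive (0, 1) := isCoprime_one_right
lemma primitive_one_one : Primitive (1, 1) := isCoprime_one_left

lemma exists_fareyAct_eq_of_abs_det2_eq_one {u v : ℤ × ℤ} (h : |det2 u v| = 1) :
    ∃ g : GL (Fin 2) ℤ, fareyAct g (pmk (1, 0)) = pmk u ∧ fareyAct g (pmk (0, 1)) = pmk v ∧
      fareyAct g (pmk (1, 1)) = pmk (u + v) := by
  obtain ⟨g, hg⟩ := exists_gact_eq_ofCols h
  refine ⟨g, ?_, ?_, ?_⟩
  · rw [fareyAct_pmk g primitive_one_zero, hg]; simp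
  · rw [fareyAct_pmk g primitive_zero_one, hg]; simp
  · rw [fareyAct_pmk g primitive_one_one, hg]; simp

lemma exists_fareyAct_eq_of_triangle {x y z : P1Q} (hxy : fareyGraph.Adj x y)
    (hxz : fareyGraph.Adj x z) (hyz : fareyGraph.Adj y z) :
    ∃ g : GL (Fin 2) ℤ, fareyAct g (pmk (1, 0)) = x ∧ fareyAct g (pmk (0, 1)) = y ∧
      fareyAct g (pmk (1, 1)) = z := by
  obtain ⟨u, hu, rfl⟩ := exists_primitive_pmk_eq x
  obtain ⟨v, hv, rfl⟩ := exists_primitive_pmk_eq y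
  have huv := (adj_pmk_iff hu hv).mp hxy
  rcases eq_pmk_add_or_sub_of_adj huv hxz hyz with rfl | rfl
  · exact exists_fareyAct_eq_of_abs_det2_eq_one huv
  · obtain ⟨g, h₁, h₂, h₃⟩ :=
      exists_fareyAct_eq_of_abs_det2_eq_one (v := -v) (by rwa [det2_neg_right, abs_neg])
    exact ⟨g, h₁, h₂.trans (pmk_neg v), h₃.trans (by rw [sub_eq_add_neg])⟩

lemma eq_one_or_eq_neg_one_of_fixes_triangle {g : GL (Fin 2) ℤ}
    (h₁ : fareyAct g (pmk (1, 0)) = pmk (1, 0)) (h₂ : fareyAct g (pmk (0, 1)) = pmk (0, 1))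
    (h₃ : fareyAct g (pmk (1, 1)) = pmk (1, 1)) : g = 1 ∨ g = -1 := by
  rw [fareyAct_pmk g primitive_one_zero] at h₁
  rw [fareyAct_pmk g primitive_zero_one] at h₂
  rw [fareyAct_pmk g primitive_one_one] at h₃
  have e₁ := eq_or_eq_neg_of_pmk_eq (primitive_one_zero.gact g) primitive_one_zero h₁
  have e₂ := eq_or_eq_neg_of_pmk_eq (primitive_zero_one.gact g) primitive_zero_one h₂
  have e₃ := eq_or_eq_neg_of_pmk_eq (primitive_one_one.gact g) primitive_one_one h₃
  simp only [gact, ofCols_apply, Prod.ext_iff] at e₁ e₂ e₃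
  norm_num at e₁ e₂ e₃
  have : g 1 0 = 0 ∧ g 0 1 = 0 ∧ (g 0 0 = 1 ∧ g 1 1 = 1 ∨ g 0 0 = -1 ∧ g 1 1 = -1) := by omega
  obtain ⟨h10, h01, ⟨h00, h11⟩ | ⟨h00, h11⟩⟩ := this
  · left
    ext i j
    fin_cases i <;> fin_cases j <;> simp [h00, h01, h10, h11]
  · right
    ext i j
    fin_cases i <;> fin_cases j <;> simp [h00, h01, h10, h11]

def step : Bool → (ℤ × ℤ) × (ℤ × ℤ) → (ℤ × ℤ) × (ℤ × ℤ)
  | true, e => (e.1, e.1 + e.2)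
  | false, e => (e.1 + e.2, e.2)

/-- The path `l` is read from its last letter: its head is the last step taken. -/
def sbEdge (r : (ℤ × ℤ) × (ℤ × ℤ)) (l : List Bool) : (ℤ × ℤ) × (ℤ × ℤ) := l.foldr step r

def med (r : (ℤ × ℤ) × (ℤ × ℤ)) (l : List Bool) : ℤ × ℤ := (sbEdge r l).1 + (sbEdge r l).2

@[simp] lemma sbEdge_nil (r : (ℤ × ℤ) × (ℤ × ℤ)) : sbEdge r [] = r := rfl

@[simp] lemma sbEdge_cons (r : (ℤ × ℤ) × (ℤ × ℤ)) (b : Bool) (l : List Bool) :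
    sbEdge r (b :: l) = step b (sbEdge r l) := rfl

lemma med_append (r : (ℤ × ℤ) × (ℤ × ℤ)) (l l' : List Bool) :
    med r (l ++ l') = med (sbEdge r l') l := by
  rw [med, med, sbEdge, List.foldr_append]
  rfl

lemma step_map (f : ℤ × ℤ →+ ℤ × ℤ) (b : Bool) (e : (ℤ × ℤ) × (ℤ × ℤ)) :
    step b (Prod.map f f e) = Prod.map f f (step b e) := by
  cases b <;> simp [step]

lemma med_map (f : ℤ × ℤ →+ ℤ × ℤ) (r : (ℤ × ℤ) × (ℤ × ℤ)) (l : List Bool) :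
    med (Prod.map f f r) l = f (med r l) := by
  have : sbEdge (Prod.map f f r) l = Prod.map f f (sbEdge r l) := by
    induction l with
    | nil => rfl
    | cons b l ih => rw [sbEdge_cons, sbEdge_cons, ih, step_map]
  simp [med, this]

def stdEdge : (ℤ × ℤ) × (ℤ × ℤ) := ((1, 0), (0, 1))

def mirEdge : (ℤ × ℤ) × (ℤ × ℤ) := ((-1, 0), (0, 1))

lemma med_eq_ofCols (u v : ℤ × ℤ) (l : List Bool) : med (u, v) l = ofCols u v (med stdEdge l) := by
  rw [← med_map]
  congr 1
  simp only [stdEdge, Prod.map, ofCols_apply]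
  simp

lemma exists_med_stdEdge_eq {p q : ℤ} (hp : 0 < p) (hq : 0 < q) (h : IsCoprime p q) :
    ∃ l, med stdEdge l = (p, q) := by
  rcases lt_trichotomy p q with hpq | rfl | hpq
  · obtain ⟨l, hl⟩ := exists_med_stdEdge_eq hp (sub_pos.2 hpq)
      (by simpa using (IsCoprime.sub_mul_left_right_iff (z := 1)).mpr h)
    refine ⟨l ++ [false], ?_⟩
    rw [med_append, show sbEdge stdEdge [false] = ((1, 1), (0, 1)) by simp [step, stdEdge],
      med_eq_ofCols, hl]
    ext <;> simp
  · obtain rfl : p = 1 := by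
      rcases Int.isUnit_iff.mp (isCoprime_self.mp h) with h | h <;> omega
    exact ⟨[], rfl⟩
  · obtain ⟨l, hl⟩ := exists_med_stdEdge_eq (sub_pos.2 hpq) hq
      (by simpa using (IsCoprime.sub_mul_left_left_iff (z := 1)).mpr h)
    refine ⟨l ++ [true], ?_⟩
    rw [med_append, show sbEdge stdEdge [true] = ((1, 0), (1, 1)) by simp [step, stdEdge],
      med_eq_ofCols, hl]
    ext <;> simp
termination_by (p + q).toNat
decreasing_by all_goals omega

def sbVerts (r : (ℤ × ℤ) × (ℤ × ℤ)) (n : ℕ) : Set P1Q :=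
  {pmk r.1, pmk r.2} ∪ (fun l => pmk (med r l)) '' {l | l.length ≤ n}

def sbSet (n : ℕ) : Set P1Q := sbVerts stdEdge n ∪ sbVerts mirEdge n

lemma pmk_med_mem_sbVerts (r : (ℤ × ℤ) × (ℤ × ℤ)) {n : ℕ} {l : List Bool} (hl : l.length ≤ n) :
    pmk (med r l) ∈ sbVerts r n :=
  Or.inr ⟨l, hl, rfl⟩

lemma sbVerts_mono (r : (ℤ × ℤ) × (ℤ × ℤ)) {m n : ℕ} (hmn : m ≤ n) : sbVerts r m ⊆ sbVerts r n :=
  Set.union_subset_union_right _ (Set.image_mono fun _ hl => le_trans hl hmn)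

lemma sbSet_mono (n : ℕ) : sbSet n ⊆ sbSet (n + 1) :=
  Set.union_subset_union (sbVerts_mono _ n.le_succ) (sbVerts_mono _ n.le_succ)

lemma sbVerts_finite (r : (ℤ × ℤ) × (ℤ × ℤ)) (n : ℕ) : (sbVerts r n).Finite :=
  (Set.toFinite _).union ((List.finite_length_le Bool n).image _)

lemma sbSet_finite (n : ℕ) : (sbSet n).Finite :=
  (sbVerts_finite _ n).union (sbVerts_finite _ n)

lemma pmk_one_zero_mem_sbSet (n : ℕ) : pmk (1, 0) ∈ sbSet n := Or.inl (Or.inl (Or.inl rfl))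

lemma pmk_zero_one_mem_sbSet (n : ℕ) : pmk (0, 1) ∈ sbSet n := Or.inl (Or.inl (Or.inr rfl))

lemma pmk_one_one_mem_sbSet (n : ℕ) : pmk (1, 1) ∈ sbSet n :=
  Or.inl (pmk_med_mem_sbVerts stdEdge (l := []) n.zero_le)

lemma exists_mem_sbSet (x : P1Q) : ∃ n, x ∈ sbSet n := by
  obtain ⟨u, hu, rfl⟩ := exists_primitive_pmk_eq x
  wlog hu₂ : 0 ≤ u.2 generalizing u
  · simpa using this (-u) hu.neg (by simp only [Prod.snd_neg]; omega)
  rcases hu₂.eq_or_lt with hu₂ | hu₂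
  · have : IsUnit u.1 := isCoprime_zero_right.mp (hu₂ ▸ hu)
    refine ⟨0, ?_⟩
    rcases Int.isUnit_iff.mp this with hu₁ | hu₁
    · rw [show u = (1, 0) from Prod.ext hu₁ hu₂.symm]
      exact pmk_one_zero_mem_sbSet 0
    · rw [show u = -(1, 0) from Prod.ext (by simp [hu₁]) (by simp [← hu₂]), pmk_neg]
      exact pmk_one_zero_mem_sbSet 0
  rcases lt_trichotomy 0 u.1 with hu₁ | hu₁ | hu₁
  · obtain ⟨l, hl⟩ := exists_med_stdEdge_eq hu₁ hu₂ hu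
    refine ⟨l.length, Or.inl ?_⟩
    rw [show u = med stdEdge l by rw [hl]]
    exact pmk_med_mem_sbVerts _ le_rfl
  · have : IsUnit u.2 := isCoprime_zero_left.mp (hu₁ ▸ hu)
    have hu₂ : u.2 = 1 := by rcases Int.isUnit_iff.mp this with h | h <;> omega
    refine ⟨0, ?_⟩
    rw [show u = (0, 1) from Prod.ext hu₁.symm hu₂]
    exact pmk_zero_one_mem_sbSet 0
  · obtain ⟨l, hl⟩ := exists_med_stdEdge_eq (neg_pos.2 hu₁) hu₂ hu.neg_left
    refine ⟨l.length, Or.inr ?_⟩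
    have : med mirEdge l = u := by
      rw [mirEdge, med_eq_ofCols, hl]
      ext <;> simp
    rw [← this]
    exact pmk_med_mem_sbVerts _ le_rfl

section Rigidity

variable {X : Set P1Q} {φ : P1Q → P1Q} {g : GL (Fin 2) ℤ}

def Agrees (X : Set P1Q) (φ : P1Q → P1Q) (g : GL (Fin 2) ℤ) (x : P1Q) : Prop :=
  x ∈ X ∧ φ x = fareyAct g x

/-- `pmk (e.1 - e.2)` is the apex of the triangle behind the edge `e`, on the side of its
parent. -/
def Settled (X : Set P1Q) (φ : P1Q → P1Q) (g : GL (Fin 2) ℤ) (e : (ℤ × ℤ) × (ℤ × ℤ)) : Prop :=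
  |det2 e.1 e.2| = 1 ∧ Agrees X φ g (pmk e.1) ∧ Agrees X φ g (pmk e.2) ∧
    Agrees X φ g (pmk (e.1 - e.2))

lemma Agrees.add (hsimp : FareySimplicial X φ) (hinj : FareyLocallyInjective X φ)
    {u v : ℤ × ℤ} (huv : |det2 u v| = 1) (hu : Agrees X φ g (pmk u))
    (hv : Agrees X φ g (pmk v)) (hsub : Agrees X φ g (pmk (u - v))) (hadd : pmk (u + v) ∈ X) :
    Agrees X φ g (pmk (u + v)) := by
  have hpu : Primitive u := primitive_of_abs_det2_eq_one huv
  have hpv : Primitive v := primitive_of_abs_det2_eq_one (v := u) (by rwa [det2_comm, abs_neg])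
  have hpadd : Primitive (u + v) := primitive_of_abs_det2_eq_one (v := v) (by rwa [det2_add_left])
  have hpsub : Primitive (u - v) := primitive_of_abs_det2_eq_one (v := v) (by rwa [det2_sub_left])
  have hu_add : fareyGraph.Adj (pmk u) (pmk (u + v)) := (adj_pmk_iff hpu hpadd).mpr <| by
    rwa [det2_add_right]
  have hv_add : fareyGraph.Adj (pmk v) (pmk (u + v)) := (adj_pmk_iff hpv hpadd).mpr <| by
    rwa [det2_comm, det2_add_left, abs_neg]
  have hu_sub : fareyGraph.Adj (pmk u) (pmk (u - v)) := (adj_pmk_iff hpu hpsub).mpr <| by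
    rwa [det2_sub_right, abs_neg]
  refine ⟨hadd, ?_⟩
  have hgu : fareyGraph.Adj (pmk (gact g u)) (φ (pmk (u + v))) := by
    rw [← fareyAct_pmk g hpu, ← hu.2]
    exact hsimp _ hu.1 _ hadd hu_add
  have hgv : fareyGraph.Adj (pmk (gact g v)) (φ (pmk (u + v))) := by
    rw [← fareyAct_pmk g hpv, ← hv.2]
    exact hsimp _ hv.1 _ hadd hv_add
  rcases eq_pmk_add_or_sub_of_adj (by rwa [abs_det2_gact]) hgu hgv with h | h
  · rw [h, ← map_add, fareyAct_pmk g hpadd]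
  · have hφ : φ (pmk (u + v)) = φ (pmk (u - v)) := by
      rw [h, ← map_sub, ← fareyAct_pmk g hpsub, hsub.2]
    have := hinj _ hu.1 ⟨hadd, Or.inr hu_add⟩ ⟨hsub.1, Or.inr hu_sub⟩ hφ
    refine absurd this (pmk_ne_of_det2_ne_zero hpadd.ne_zero hpsub.ne_zero ?_)
    have : det2 (u + v) (u - v) = -2 * det2 u v := by
      simp only [det2, Prod.fst_add, Prod.snd_add, Prod.fst_sub, Prod.snd_sub]; ring
    rcases abs_eq_one_iff.mp huv with h | h <;> simp [this, h]

lemma Settled.step (hsimp : FareySimplicial X φ) (hinj : FareyLocallyInjective X φ)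
    {e : (ℤ × ℤ) × (ℤ × ℤ)} (he : Settled X φ g e) (hX : pmk (e.1 + e.2) ∈ X) (b : Bool) :
    Settled X φ g (step b e) := by
  obtain ⟨hdet, h₁, h₂, h₃⟩ := he
  have hmed := h₁.add hsimp hinj hdet h₂ h₃ hX
  cases b
  · refine ⟨by rwa [Farey.step, det2_add_left], hmed, h₂, ?_⟩
    rwa [Farey.step, add_sub_cancel_right]
  · refine ⟨by rwa [Farey.step, det2_add_right], h₁, hmed, ?_⟩
    rwa [Farey.step, sub_add_cancel_left, pmk_neg]

lemma Settled.sbEdge (hsimp : FareySimplicial X φ) (hinj : FareyLocallyInjective X φ)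
    {r : (ℤ × ℤ) × (ℤ × ℤ)} {n : ℕ} (hr : Settled X φ g r) (hX : sbVerts r n ⊆ X) :
    ∀ l : List Bool, l.length ≤ n → Settled X φ g (sbEdge r l)
  | [], _ => hr
  | b :: l, hl => by
    have hl' : l.length ≤ n := by simp only [List.length_cons] at hl; omega
    exact (Settled.sbEdge hsimp hinj hr hX l hl').step hsimp hinj
      (hX (pmk_med_mem_sbVerts r hl')) b

lemma Settled.agrees_of_mem_sbVerts (hsimp : FareySimplicial X φ)
    (hinj : FareyLocallyInjective X φ) {r : (ℤ × ℤ) × (ℤ × ℤ)} {n : ℕ} (hr : Settled X φ g r)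
    (hX : sbVerts r n ⊆ X) {x : P1Q} (hx : x ∈ sbVerts r n) : Agrees X φ g x := by
  rcases hx with (rfl | rfl) | ⟨l, hl, rfl⟩
  · exact hr.2.1
  · exact hr.2.2.1
  · obtain ⟨hdet, h₁, h₂, h₃⟩ := hr.sbEdge hsimp hinj hX l hl
    exact h₁.add hsimp hinj hdet h₂ h₃ (hX (pmk_med_mem_sbVerts r hl))

end Rigidity

/-- The tree of `mirEdge` goes first: the apex behind `stdEdge` is its root mediant
`[-1 : 1]`. -/
theorem exists_fareyAct_eq_on_sbSet (n : ℕ) {φ : P1Q → P1Q}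
    (hsimp : FareySimplicial (sbSet n) φ) (hinj : FareyLocallyInjective (sbSet n) φ) :
    ∃ g : GL (Fin 2) ℤ, ∀ x ∈ sbSet n, φ x = fareyAct g x := by
  have h₁ := pmk_one_zero_mem_sbSet n
  have h₂ := pmk_zero_one_mem_sbSet n
  have h₃ := pmk_one_one_mem_sbSet n
  have adj {u v : ℤ × ℤ} (hu : Primitive u) (hv : Primitive v) (h : |det2 u v| = 1) :=
    (adj_pmk_iff hu hv).mpr h
  obtain ⟨g, hg₁, hg₂, hg₃⟩ := exists_fareyAct_eq_of_triangle
    (hsimp _ h₁ _ h₂ (adj primitive_one_zero primitive_zero_one (by norm_num [det2])))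
    (hsimp _ h₁ _ h₃ (adj primitive_one_zero primitive_one_one (by norm_num [det2])))
    (hsimp _ h₂ _ h₃ (adj primitive_zero_one primitive_one_one (by norm_num [det2])))
  have hmir : Settled (sbSet n) φ g mirEdge := by
    refine ⟨by norm_num [mirEdge, det2], ?_, ⟨h₂, hg₂.symm⟩, ?_⟩
    · rw [show mirEdge.1 = -(1, 0) by simp [mirEdge], pmk_neg]
      exact ⟨h₁, hg₁.symm⟩
    · rw [show mirEdge.1 - mirEdge.2 = -(1, 1) by simp [mirEdge], pmk_neg]
      exact ⟨h₃, hg₃.symm⟩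
  have hstd : Settled (sbSet n) φ g stdEdge := by
    refine ⟨by norm_num [stdEdge, det2], ⟨h₁, hg₁.symm⟩, ⟨h₂, hg₂.symm⟩, ?_⟩
    rw [show stdEdge.1 - stdEdge.2 = -(-1, 1) by simp [stdEdge], pmk_neg]
    exact hmir.agrees_of_mem_sbVerts hsimp hinj Set.subset_union_right
      (pmk_med_mem_sbVerts mirEdge (l := []) n.zero_le)
  refine ⟨g, fun x hx => ?_⟩
  rcases hx with hx | hx
  · exact (hstd.agrees_of_mem_sbVerts hsimp hinj Set.subset_union_left hx).2
  · exact (hmir.agrees_of_mem_sbVerts hsimp hinj Set.subset_union_right hx).2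

end Farey

/-- Theorem 1.1 for the Farey complex: there is an increasing sequence of
finite rigid subsets of `ℙ¹(ℚ)`, each with pointwise stabilizer exactly `{±I}` in
`GL(2,ℤ)`, exhausting `ℙ¹(ℚ)`. -/
theorem farey_exhaustion_by_finite_rigid_sets :
    ∃ Xs : ℕ → Set P1Q,
      (∀ i : ℕ, Xs i ⊆ Xs (i + 1)) ∧
      (∀ i : ℕ, (Xs i).Finite) ∧
      (∀ i : ℕ, ∀ φ : P1Q → P1Q,
        FareySimplicial (Xs i) φ → FareyLocallyInjective (Xs i) φ →
        ∃ g : GL (Fin 2) ℤ, ∀ y ∈ Xs i, φ y = fareyAct g y) ∧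
      (∀ i : ℕ,
        {g : GL (Fin 2) ℤ | ∀ x ∈ Xs i, fareyAct g x = x} = {1, -1}) ∧
      (⋃ i : ℕ, Xs i) = Set.univ := by
  open Farey in
  refine ⟨sbSet, sbSet_mono, sbSet_finite, fun i φ => exists_fareyAct_eq_on_sbSet i, ?_, ?_⟩
  · intro i
    ext g
    constructor
    · intro hg
      exact eq_one_or_eq_neg_one_of_fixes_triangle (hg _ (pmk_one_zero_mem_sbSet i))
        (hg _ (pmk_zero_one_mem_sbSet i)) (hg _ (pmk_one_one_mem_sbSet i))
    · rintro (rfl | rfl) x -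
      exacts [fareyAct_one x, fareyAct_neg_one x]
  · exact Set.eq_univ_of_forall fun x => Set.mem_iUnion.mpr (exists_mem_sbSet x)
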